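/- arXiv:2009.09720 — 5 statements merged into one kernel-verified Lean document; each statement's English description precedes it below -/
import Mathlib

section
/- Let M be an open subset of ℂⁿ, let f : ℂⁿ → ℂ be holomorphic on M, and let K, δ : M → ℝ be continuous positive functions. Suppose z ∈ M and r > 0 are such that the closed polydisk D̄_r(z) = {w : |w_k − z_k| ≤ r for k = 1,…,n} is contained in M, and suppose ∫_M |f(w)|² K(w)⁻¹ δ(w) dμ_L(w) < ∞, where μ_L is Lebesgue measure on ℂⁿ. Then |f(z)|² ≤ (π r²)^{−2n} · (∫_M |f(w)|² K(w)⁻¹ δ(w) dμ_L(w)) · (∫_{D̄_r(z)} K(w) δ(w)⁻¹ dμ_L(w)). In particular the evaluation map f ↦ f(z) is continuous on the weighted L² space of holomorphic functions. -/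
/-!
Integrating the mean value property of holomorphic functions over circles in polar coordinates
gives the mean value property on disks, and Fubini iterates it to the polydisk `D = D̄_r(z)`:
`(π r²)ⁿ f(z) = ∫_D f`. Hence `(π r²)ⁿ |f(z)| ≤ ∫_D |f| = ∫_D (|f| (δ/K)^½) (K/δ)^½`, and
Cauchy–Schwarz bounds the square of the right side by
`∫_D |f|² K⁻¹ δ · ∫_D K δ⁻¹ ≤ ∫_M |f|² K⁻¹ δ · ∫_D K δ⁻¹`.
-/

open MeasureTheory Metric Real Set

theorem circleMap_mem_closedBall_iff {c : ℂ} {s r θ : ℝ} :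
    circleMap c s θ ∈ closedBall c r ↔ |s| ≤ r := by
  rw [mem_closedBall, dist_eq_norm, circleMap_sub_center, norm_circleMap_zero]

section
variable {E : Type*} [NormedAddCommGroup E] [NormedSpace ℝ E]

theorem setIntegral_Ioo_circleMap_eq_smul_circleAverage (g : ℂ → E) (c : ℂ) (s : ℝ) :
    ∫ θ in Ioo (-π) π, g (circleMap c s θ) = (2 * π) • circleAverage g c s := by
  rw [circleAverage_eq_integral_add (-π), smul_inv_smul₀ two_pi_pos.ne',
    intervalIntegral.integral_comp_add_right (fun θ => g (circleMap c s θ)),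
    intervalIntegral.integral_of_le (by linarith [pi_pos]), integral_Ioc_eq_integral_Ioo]
  ring_nf

theorem setIntegral_closedBall_eq_circleAverage {g : ℂ → E} {c : ℂ} {r : ℝ}
    (hg : ContinuousOn g (closedBall c r)) :
    ∫ w in closedBall c r, g w = ∫ s in Ioc 0 r, (2 * π * s) • circleAverage g c s := by
  set S : Set (ℝ × ℝ) := Ioc 0 r ×ˢ Ioo (-π) π
  have hS : S ⊆ polarCoord.target := prod_mono_left Ioc_subset_Ioi_self
  have hpolar : ∀ p ∈ polarCoord.target,
      p.1 • (closedBall c r).indicator g (c + Complex.polarCoord.symm p) =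
        S.indicator (fun p => p.1 • g (circleMap c p.1 p.2)) p := by
    rintro ⟨s, θ⟩ ⟨hs : 0 < s, hθ⟩
    have hcirc : c + Complex.polarCoord.symm (s, θ) = circleMap c s θ := by
      rw [circleMap, Complex.exp_mul_I, Complex.polarCoord_symm_apply]; push_cast; ring
    simp only [hcirc, indicator, circleMap_mem_closedBall_iff, abs_of_pos hs, S,
      mem_prod, mem_Ioc, hs, hθ, true_and, and_true, smul_ite, smul_zero]
  have hint : IntegrableOn (fun p : ℝ × ℝ => p.1 • g (circleMap c p.1 p.2)) S := by
    have hmaps : MapsTo (fun p : ℝ × ℝ => circleMap c p.1 p.2) (Icc 0 r ×ˢ Icc (-π) π)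
        (closedBall c r) := fun p hp =>
      circleMap_mem_closedBall_iff.2 ((abs_of_nonneg hp.1.1).trans_le hp.1.2)
    have hcont : ContinuousOn (fun p : ℝ × ℝ => p.1 • g (circleMap c p.1 p.2))
        (Icc 0 r ×ˢ Icc (-π) π) :=
      continuousOn_fst.smul (hg.comp (by fun_prop) hmaps)
    exact (hcont.integrableOn_compact (isCompact_Icc.prod isCompact_Icc)).mono_set
      (prod_mono Ioc_subset_Icc_self Ioo_subset_Icc_self)
  calc ∫ w in closedBall c r, g w = ∫ w, (closedBall c r).indicator g (c + w) := by
        rw [integral_add_left_eq_self, integral_indicator measurableSet_closedBall]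
    _ = ∫ p in polarCoord.target,
          p.1 • (closedBall c r).indicator g (c + Complex.polarCoord.symm p) :=
        (Complex.integral_comp_polarCoord_symm _).symm
    _ = ∫ p in S, p.1 • g (circleMap c p.1 p.2) := by
        rw [setIntegral_congr_fun polarCoord.open_target.measurableSet hpolar,
          setIntegral_indicator (measurableSet_Ioc.prod measurableSet_Ioo),
          inter_eq_self_of_subset_right hS]
    _ = ∫ s in Ioc 0 r, s • ∫ θ in Ioo (-π) π, g (circleMap c s θ) := by
        rw [Measure.volume_eq_prod, setIntegral_prod _ hint]
        simp_rw [integral_smul]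
    _ = _ := by simp_rw [setIntegral_Ioo_circleMap_eq_smul_circleAverage, smul_smul, mul_comm]

end

theorem Fin.cons_mem_univ_pi {n : ℕ} {α : Type*} {s : Fin (n + 1) → Set α} {a : α}
    {b : Fin n → α} : (Fin.cons a b : Fin (n + 1) → α) ∈ univ.pi s ↔
      a ∈ s 0 ∧ b ∈ univ.pi fun j => s j.succ := by
  simp [Fin.forall_fin_succ]

theorem setIntegral_univ_pi_fin_succ {n : ℕ} {α E : Type*} [MeasureSpace α]
    [SigmaFinite (volume : Measure α)] [NormedAddCommGroup E] [NormedSpace ℝ E]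
    {s : Fin (n + 1) → Set α} {f : (Fin (n + 1) → α) → E} (hf : IntegrableOn f (univ.pi s)) :
    ∫ x in univ.pi s, f x = ∫ a in s 0, ∫ b in univ.pi (fun j => s j.succ), f (Fin.cons a b) := by
  set e := (MeasurableEquiv.piFinSuccAbove (fun _ : Fin (n + 1) => α) 0).symm
  have hcons : MeasurePreserving e := (volume_preserving_piFinSuccAbove _ 0).symm
  have he : ∀ p, e p = Fin.cons p.1 p.2 := fun p => by simp [e, Fin.consEquiv]
  have hpre : e ⁻¹' univ.pi s = s 0 ×ˢ univ.pi fun j => s j.succ := by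
    ext p
    rw [mem_preimage, he, Fin.cons_mem_univ_pi, mem_prod]
  have hint := (hcons.integrableOn_comp_preimage e.measurableEmbedding).2 hf
  rw [hpre, Measure.volume_eq_prod] at hint
  rw [← hcons.setIntegral_preimage_emb e.measurableEmbedding, hpre,
    Measure.volume_eq_prod, setIntegral_prod (fun p => f (e p)) hint]
  simp only [he]

section
variable {E : Type*} [NormedAddCommGroup E] [NormedSpace ℂ E] [CompleteSpace E]

theorem DifferentiableOn.setIntegral_closedBall {g : ℂ → E} {c : ℂ} {r : ℝ} (hr : 0 ≤ r)
    (hg : DifferentiableOn ℂ g (closedBall c r)) :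
    ∫ w in closedBall c r, g w = (π * r ^ 2) • g c := by
  have hmean : ∀ s ∈ Ioc 0 r, (2 * π * s) • circleAverage g c s = (2 * π * s) • g c := by
    intro s ⟨hs, hsr⟩
    rw [DiffContOnCl.circleAverage]
    refine (hg.mono ?_).diffContOnCl
    rw [closure_ball _ (abs_pos.2 hs.ne').ne', abs_of_pos hs]
    exact closedBall_subset_closedBall hsr
  rw [setIntegral_closedBall_eq_circleAverage hg.continuousOn,
    setIntegral_congr_fun measurableSet_Ioc hmean, integral_smul_const,
    ← intervalIntegral.integral_of_le hr, intervalIntegral.integral_const_mul, integral_id]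
  ring_nf

theorem DifferentiableOn.setIntegral_univ_pi_closedBall :
    ∀ {n : ℕ} {f : (Fin n → ℂ) → E} {z : Fin n → ℂ} {r : Fin n → ℝ}, (∀ k, 0 ≤ r k) →
      DifferentiableOn ℂ f (univ.pi fun k => closedBall (z k) (r k)) →
      ∫ w in univ.pi (fun k => closedBall (z k) (r k)), f w = (∏ k, π * r k ^ 2) • f z
  | 0, f, z, r, _, _ => by
    simp [Subsingleton.elim _ z, measureReal_def, volume_pi]
  | n + 1, f, z, r, hr, hf => by
    have hcons : ∀ a ∈ closedBall (z 0) (r 0), MapsTo (fun b => Fin.cons a b)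
        (univ.pi fun j => closedBall (z j.succ) (r j.succ))
        (univ.pi fun k => closedBall (z k) (r k)) :=
      fun a ha b hb => Fin.cons_mem_univ_pi.2 ⟨ha, hb⟩
    have hinner : ∀ a ∈ closedBall (z 0) (r 0),
        ∫ b in univ.pi (fun j : Fin n => closedBall (z j.succ) (r j.succ)), f (Fin.cons a b) =
          (∏ j : Fin n, π * r j.succ ^ 2) • f (Fin.cons a (Fin.tail z)) := fun a ha =>
      DifferentiableOn.setIntegral_univ_pi_closedBall (fun j => hr j.succ)
        (hf.comp (by fun_prop) (hcons a ha))
    have houter :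
        DifferentiableOn ℂ (fun a => f (Fin.cons a (Fin.tail z))) (closedBall (z 0) (r 0)) :=
      hf.comp (by fun_prop) fun a ha =>
        hcons a ha fun (j : Fin n) _ => mem_closedBall_self (hr j.succ)
    rw [setIntegral_univ_pi_fin_succ, setIntegral_congr_fun measurableSet_closedBall hinner,
      integral_smul, houter.setIntegral_closedBall (hr 0), Fin.cons_self_tail, smul_smul,
      Fin.prod_univ_succ, mul_comm]
    exact hf.continuousOn.integrableOn_compact (isCompact_univ_pi fun k => isCompact_closedBall _ _)

theorem DifferentiableOn.norm_mul_prod_le_setIntegral_norm {n : ℕ} {f : (Fin n → ℂ) → E}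
    {z : Fin n → ℂ} {r : Fin n → ℝ} (hr : ∀ k, 0 ≤ r k)
    (hf : DifferentiableOn ℂ f (univ.pi fun k => closedBall (z k) (r k))) :
    ‖f z‖ * ∏ k, π * r k ^ 2 ≤ ∫ w in univ.pi (fun k => closedBall (z k) (r k)), ‖f w‖ :=
  calc ‖f z‖ * ∏ k, π * r k ^ 2
      = ‖∫ w in univ.pi (fun k => closedBall (z k) (r k)), f w‖ := by
        rw [hf.setIntegral_univ_pi_closedBall hr, norm_smul, mul_comm,
          norm_of_nonneg (Finset.prod_nonneg fun k _ => by positivity)]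
    _ ≤ _ := norm_integral_le_integral_norm _

end

section
variable {α : Type*} [MeasurableSpace α] {μ : Measure α}

theorem sq_integral_mul_le_of_nonneg {φ ψ : α → ℝ} (hφ0 : 0 ≤ᵐ[μ] φ) (hψ0 : 0 ≤ᵐ[μ] ψ)
    (hφ : MemLp φ 2 μ) (hψ : MemLp ψ 2 μ) :
    (∫ x, φ x * ψ x ∂μ) ^ 2 ≤ (∫ x, φ x ^ 2 ∂μ) * ∫ x, ψ x ^ 2 ∂μ := by
  have h2 : ENNReal.ofReal 2 = 2 := by norm_num
  have holder := integral_mul_le_Lp_mul_Lq_of_nonneg HolderConjugate.two_two hφ0 hψ0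
    (h2 ▸ hφ) (h2 ▸ hψ)
  simp only [rpow_two, ← Real.sqrt_eq_rpow] at holder
  calc (∫ x, φ x * ψ x ∂μ) ^ 2
      ≤ (√(∫ x, φ x ^ 2 ∂μ) * √(∫ x, ψ x ^ 2 ∂μ)) ^ 2 :=
        pow_le_pow_left₀ (integral_nonneg_of_ae (by
          filter_upwards [hφ0, hψ0] with x hx hy using mul_nonneg hx hy)) holder 2
    _ = (∫ x, φ x ^ 2 ∂μ) * ∫ x, ψ x ^ 2 ∂μ := by
        rw [mul_pow, sq_sqrt (integral_nonneg fun x => sq_nonneg _),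
          sq_sqrt (integral_nonneg fun x => sq_nonneg _)]

theorem sq_integral_le_integral_sq_mul_inv_mul_integral {g w : α → ℝ} (hg : 0 ≤ᵐ[μ] g)
    (hw : ∀ᵐ x ∂μ, 0 < w x) (hgw : Integrable (fun x => g x ^ 2 * (w x)⁻¹) μ)
    (hwi : Integrable w μ) :
    (∫ x, g x ∂μ) ^ 2 ≤ (∫ x, g x ^ 2 * (w x)⁻¹ ∂μ) * ∫ x, w x ∂μ := by
  have hsqrt_memLp : ∀ {u : α → ℝ}, Integrable u μ → 0 ≤ᵐ[μ] u → MemLp (fun x => √(u x)) 2 μ :=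
    fun hu hu0 => (memLp_two_iff_integrable_sq
      (continuous_sqrt.comp_aestronglyMeasurable hu.1)).2
      (hu.congr (by filter_upwards [hu0] with x hx using (sq_sqrt hx).symm))
  have hgw0 : 0 ≤ᵐ[μ] fun x => g x ^ 2 * (w x)⁻¹ := by
    filter_upwards [hw] with x hx using by positivity
  have hw0 : 0 ≤ᵐ[μ] w := by filter_upwards [hw] with x hx using hx.le
  have hprod : (fun x => √(g x ^ 2 * (w x)⁻¹) * √(w x)) =ᵐ[μ] g := by
    filter_upwards [hg, hw] with x hgx hwx
    rw [← sqrt_mul (by positivity), inv_mul_cancel_right₀ hwx.ne', sqrt_sq hgx]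
  have := sq_integral_mul_le_of_nonneg (ae_of_all _ fun x => sqrt_nonneg _)
    (ae_of_all _ fun x => sqrt_nonneg _) (hsqrt_memLp hgw hgw0) (hsqrt_memLp hwi hw0)
  have hsq : ∀ {u : α → ℝ}, 0 ≤ᵐ[μ] u → (fun x => √(u x) ^ 2) =ᵐ[μ] u := fun hu0 => by
    filter_upwards [hu0] with x hx using sq_sqrt hx
  rwa [integral_congr_ae hprod, integral_congr_ae (hsq hgw0), integral_congr_ae (hsq hw0)] at this

end

theorem eval_continuous_weighted_bergman_general {n : ℕ} (M : Set (Fin n → ℂ))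
    (hM : IsOpen M) (f : (Fin n → ℂ) → ℂ) (hf : DifferentiableOn ℂ f M)
    (K δ : (Fin n → ℂ) → ℝ) (hK : ContinuousOn K M) (hδ : ContinuousOn δ M)
    (hKpos : ∀ x ∈ M, 0 < K x) (hδpos : ∀ x ∈ M, 0 < δ x)
    (z : Fin n → ℂ) (r : ℝ) (hr : 0 < r)
    (hD : {w : Fin n → ℂ | ∀ k, ‖w k - z k‖ ≤ r} ⊆ M)
    (hint : IntegrableOn (fun w => ‖f w‖ ^ 2 * (K w)⁻¹ * δ w) M volume) :
    ‖f z‖ ^ 2 ≤ ((Real.pi * r ^ 2) ^ (2 * n))⁻¹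
        * (∫ w in M, ‖f w‖ ^ 2 * (K w)⁻¹ * δ w)
        * (∫ w in {w : Fin n → ℂ | ∀ k, ‖w k - z k‖ ≤ r},
            K w * (δ w)⁻¹) := by
  set D := {w : Fin n → ℂ | ∀ k, ‖w k - z k‖ ≤ r}
  have hDpi : D = univ.pi fun k => closedBall (z k) r := by ext; simp [D, dist_eq_norm]
  have hDc : IsCompact D := hDpi ▸ isCompact_univ_pi fun k => isCompact_closedBall _ _
  have hsubmean : ‖f z‖ * (π * r ^ 2) ^ n ≤ ∫ w in D, ‖f w‖ := by
    simpa [hDpi] using (hf.mono (hDpi ▸ hD)).norm_mul_prod_le_setIntegral_norm fun _ => hr.le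
  have hweight_pos : ∀ w ∈ D, 0 < K w * (δ w)⁻¹ := fun w hw =>
    mul_pos (hKpos w (hD hw)) (inv_pos.2 (hδpos w (hD hw)))
  have hweight : ∀ w, ‖f w‖ ^ 2 * (K w * (δ w)⁻¹)⁻¹ = ‖f w‖ ^ 2 * (K w)⁻¹ * δ w := fun w => by
    rw [mul_inv, inv_inv, mul_assoc]
  have hCS := sq_integral_le_integral_sq_mul_inv_mul_integral (μ := volume.restrict D)
    (ae_of_all _ fun w => norm_nonneg (f w)) ((ae_restrict_mem hDc.measurableSet).mono hweight_pos)
    (by simp only [hweight]; exact hint.mono_set hD)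
    (((hK.mono hD).mul ((hδ.mono hD).inv₀ fun w hw => (hδpos w (hD hw)).ne')).integrableOn_compact
      hDc)
  simp only [hweight] at hCS
  have hmono : ∫ w in D, ‖f w‖ ^ 2 * (K w)⁻¹ * δ w ≤ ∫ w in M, ‖f w‖ ^ 2 * (K w)⁻¹ * δ w :=
    setIntegral_mono_set hint ((ae_restrict_mem hM.measurableSet).mono fun w hw =>
      mul_nonneg (mul_nonneg (sq_nonneg _) (inv_pos.2 (hKpos w hw)).le) (hδpos w hw).le)
      hD.eventuallyLE
  have hweight_int : 0 ≤ ∫ w in D, K w * (δ w)⁻¹ :=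
    setIntegral_nonneg hDc.measurableSet fun w hw => (hweight_pos w hw).le
  rw [mul_assoc, ← div_eq_inv_mul, le_div_iff₀ (by positivity), pow_mul', ← mul_pow]
  exact (pow_le_pow_left₀ (by positivity) hsubmean 2).trans
    (hCS.trans (mul_le_mul_of_nonneg_right hmono hweight_int))

/-- Continuity of point evaluation on a weighted L² space of holomorphic functions:
if `f` is holomorphic on an open set `M ⊆ ℂⁿ`, the closed polydisk of radius `r`
around `z` is contained in `M`, and `∫_M |f|² K⁻¹ δ dμ_L < ∞`, then
`|f z|² ≤ (π r²)^(−2n) (∫_M |f|² K⁻¹ δ dμ_L) (∫_{D̄_r(z)} K δ⁻¹ dμ_L)`. -/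
theorem eval_continuous_weighted_bergman {n : ℕ} (M : Set (Fin n → ℂ))
    (hM : IsOpen M) (f : (Fin n → ℂ) → ℂ) (hf : DifferentiableOn ℂ f M)
    (K δ : (Fin n → ℂ) → ℝ) (hK : ContinuousOn K M) (hδ : ContinuousOn δ M)
    (hKpos : ∀ x ∈ M, 0 < K x) (hδpos : ∀ x ∈ M, 0 < δ x)
    (z : Fin n → ℂ) (hz : z ∈ M) (r : ℝ) (hr : 0 < r)
    (hD : {w : Fin n → ℂ | ∀ k, ‖w k - z k‖ ≤ r} ⊆ M)
    (hint : IntegrableOn (fun w => ‖f w‖ ^ 2 * (K w)⁻¹ * δ w) M volume) :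
    ‖f z‖ ^ 2 ≤ ((Real.pi * r ^ 2) ^ (2 * n))⁻¹
        * (∫ w in M, ‖f w‖ ^ 2 * (K w)⁻¹ * δ w)
        * (∫ w in {w : Fin n → ℂ | ∀ k, ‖w k - z k‖ ≤ r},
            K w * (δ w)⁻¹) :=
  eval_continuous_weighted_bergman_general M hM f hf K δ hK hδ hKpos hδpos z r hr hD hint
end

section
/- Fix γ > 0 and let g = [a₁,a₂,a₃] be an element of the Heisenberg group, with a₁, a₂, a₃ ∈ ℝ. For w ∈ ℂ set α(g⁻¹, w) = exp(i a₃ γ + (1/4)(−a₂ − a₁ i)(−2w + γ(a₂ − a₁ i))) and g⁻¹·w = w − γ(a₂ − i a₁). Then for every z ∈ ℂ, e^{−|z|²/(2γ)} · (2πγ)⁻¹ ∫_ℂ α(g⁻¹, w) · exp(conj(z)(g⁻¹·w)/(2γ)) · exp(z · conj(w)/(2γ)) · e^{−|w|²/(2γ)} dA(w) = exp(i γ a₃ − (γ/4)(a₁² + a₂²) + (1/2)(a₂ + i a₁) z + (1/2)(−a₂ + i a₁) conj(z)). (This is the Berezin symbol formula S_γ(π_γ(g))(z) for the Bargmann–Fock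 representation of the Heisenberg group.) -/
/-!
In the integrand, the exponents add up to a constant plus the Gaussian exponent
`-|w|²/(2γ) + β w + δ w̄`, where `β = (a₂ + i a₁)/2 + z̄/(2γ)` and `δ = z/(2γ)`. In real
coordinates `w = x + iy` this splits into two one-dimensional Gaussians, so that
`∫ exp(-b|w|² + β w + δ w̄) = (π / b) exp(β δ / b)`. With `b = 1/(2γ)`, the factor `π / b`
cancels `(2πγ)⁻¹`, and the term `|z|²/(2γ)` in `β δ / b` cancels `e^{-|z|²/(2γ)}`.
-/

open MeasureTheory Complex ComplexConjugate

lemma integral_cexp_neg_mul_sq_add_mul {b : ℂ} (hb : 0 < b.re) (c : ℂ) :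
    ∫ x : ℝ, cexp (-b * x ^ 2 + c * x) = (Real.pi / b) ^ (1 / 2 : ℂ) * cexp (c ^ 2 / (4 * b)) := by
  have hb' : (-b).re < 0 := by simpa using hb
  simpa [div_neg] using integral_cexp_quadratic hb' c 0

theorem integral_cexp_neg_mul_sq_norm_add_mul_add_mul_conj {b : ℂ} (hb : 0 < b.re) (β δ : ℂ) :
    ∫ w : ℂ, cexp (-b * ‖w‖ ^ 2 + β * w + δ * conj w) = Real.pi / b * cexp (β * δ / b) := by
  have hb0 : b ≠ 0 := by rintro rfl; simp at hb
  have hsplit (p : ℝ × ℝ) :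
      cexp (-b * ‖measurableEquivRealProd.symm p‖ ^ 2 + β * measurableEquivRealProd.symm p
          + δ * conj (measurableEquivRealProd.symm p))
        = cexp (-b * p.1 ^ 2 + (β + δ) * p.1) * cexp (-b * p.2 ^ 2 + I * (β - δ) * p.2) := by
    have hnorm : ((‖(p.1 : ℂ) + p.2 * I‖ : ℝ) : ℂ) ^ 2 = (p.1 : ℂ) ^ 2 + (p.2 : ℂ) ^ 2 := by
      rw [← ofReal_pow, Complex.sq_norm, normSq_add_mul_I]
      push_cast
      ring
    rw [measurableEquivRealProd_symm_apply, mk_eq_add_mul_I, hnorm, ← Complex.exp_add]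
    simp only [map_add, map_mul, conj_ofReal, conj_I]
    congr 1
    ring
  rw [← volume_preserving_equiv_real_prod.symm.integral_comp
    measurableEquivRealProd.symm.measurableEmbedding, Measure.volume_eq_prod]
  simp_rw [hsplit]
  rw [integral_prod_mul (fun x : ℝ => cexp (-b * x ^ 2 + (β + δ) * x))
    (fun y : ℝ => cexp (-b * y ^ 2 + I * (β - δ) * y)),
    integral_cexp_neg_mul_sq_add_mul hb, integral_cexp_neg_mul_sq_add_mul hb]
  have hsq : (Real.pi / b) ^ (1 / 2 : ℂ) * (Real.pi / b) ^ (1 / 2 : ℂ) = Real.pi / b := by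
    rw [← sq, one_div, cpow_ofNat_inv_pow]
  rw [mul_mul_mul_comm, hsq, ← Complex.exp_add]
  congr 2
  rw [mul_pow, I_sq]
  field_simp
  ring

lemma heisenberg_berezin_integrand_eq {γ : ℝ} (hγ : γ ≠ 0) (a₁ a₂ a₃ : ℝ) (z w : ℂ) :
    cexp (I * a₃ * γ + (1 / 4) * (-(a₂ : ℂ) - a₁ * I) * (-2 * w + γ * (a₂ - a₁ * I)))
        * cexp (conj z * (w - γ * (a₂ - I * a₁)) / (2 * γ)) * cexp (z * conj w / (2 * γ))
        * ((Real.exp (-‖w‖ ^ 2 / (2 * γ)) : ℝ) : ℂ)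
      = cexp (I * a₃ * γ - γ / 4 * (a₁ ^ 2 + a₂ ^ 2) - conj z * (a₂ - I * a₁) / 2)
        * cexp (-(2 * γ : ℂ)⁻¹ * ‖w‖ ^ 2 + ((a₂ + a₁ * I) / 2 + conj z / (2 * γ)) * w
          + z / (2 * γ) * conj w) := by
  have hγ0 : (γ : ℂ) ≠ 0 := ofReal_ne_zero.mpr hγ
  simp only [ofReal_exp, ← Complex.exp_add]
  congr 1
  push_cast
  linear_combination (γ * a₁ ^ 2 / 4) * I_sq - conj z * (a₂ - I * a₁) / 2 * mul_inv_cancel₀ hγ0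

/-- Berezin symbol of the Bargmann–Fock representation of the Heisenberg group:
for `g = [a₁,a₂,a₃]`, with `α(g⁻¹,w) = exp(i a₃ γ + (1/4)(−a₂−a₁i)(−2w + γ(a₂−a₁i)))`
and `g⁻¹·w = w − γ(a₂ − ia₁)`,
`S_γ(π_γ(g))(z) = exp(iγa₃ − (γ/4)(a₁²+a₂²) + (1/2)(a₂+ia₁)z + (1/2)(−a₂+ia₁) conj z)`. -/
theorem heisenberg_berezin_symbol (γ a₁ a₂ a₃ : ℝ) (hγ : 0 < γ) (z : ℂ) :
    ((Real.exp (-‖z‖ ^ 2 / (2 * γ)) * (2 * Real.pi * γ)⁻¹ : ℝ) : ℂ)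
        * ∫ w : ℂ,
            Complex.exp (Complex.I * a₃ * γ
                + (1 / 4) * (-(a₂ : ℂ) - (a₁ : ℂ) * Complex.I)
                  * (-2 * w + (γ : ℂ) * ((a₂ : ℂ) - (a₁ : ℂ) * Complex.I)))
              * Complex.exp ((starRingEnd ℂ) z
                  * (w - (γ : ℂ) * ((a₂ : ℂ) - Complex.I * (a₁ : ℂ))) / (2 * γ))
              * Complex.exp (z * (starRingEnd ℂ) w / (2 * γ))
              * ((Real.exp (-‖w‖ ^ 2 / (2 * γ)) : ℝ) : ℂ)
      = Complex.exp (Complex.I * γ * a₃ - ((γ : ℂ) / 4) * ((a₁ : ℂ) ^ 2 + (a₂ : ℂ) ^ 2)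
          + (1 / 2) * ((a₂ : ℂ) + Complex.I * a₁) * z
          + (1 / 2) * (-(a₂ : ℂ) + Complex.I * a₁) * (starRingEnd ℂ) z) := by
  have hγ0 : (γ : ℂ) ≠ 0 := ofReal_ne_zero.mpr hγ.ne'
  have hb : 0 < ((2 * γ : ℂ)⁻¹).re := by
    rw [← ofReal_ofNat, ← ofReal_mul, ← ofReal_inv, ofReal_re]
    positivity
  simp_rw [heisenberg_berezin_integrand_eq hγ.ne']
  rw [integral_const_mul, integral_cexp_neg_mul_sq_norm_add_mul_add_mul_conj hb]
  set A : ℂ := I * a₃ * γ - γ / 4 * (a₁ ^ 2 + a₂ ^ 2) - conj z * (a₂ - I * a₁) / 2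
  set β : ℂ := (a₂ + a₁ * I) / 2 + conj z / (2 * γ)
  set δ : ℂ := z / (2 * γ)
  have hpi : (Real.pi : ℂ) / (2 * (γ : ℂ))⁻¹ * (2 * (Real.pi : ℂ) * γ)⁻¹ = 1 := by
    have hπ : (Real.pi : ℂ) ≠ 0 := ofReal_ne_zero.mpr Real.pi_ne_zero
    field_simp
  have hnorm : ((‖z‖ : ℝ) : ℂ) ^ 2 = z * conj z := by
    rw [← ofReal_pow, Complex.sq_norm, ← mul_conj]
  push_cast [ofReal_exp]
  calc _ = cexp (-‖z‖ ^ 2 / (2 * γ) + A + β * δ / (2 * (γ : ℂ))⁻¹)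
          * (Real.pi / (2 * (γ : ℂ))⁻¹ * (2 * (Real.pi : ℂ) * γ)⁻¹) := by
        rw [Complex.exp_add, Complex.exp_add]; ring
    _ = _ := by
        rw [hpi, mul_one, hnorm]
        congr 1
        simp only [A, β, δ]
        field_simp
        ring
end

section
/- Fix γ > 0 and a₁, a₂, a₃ ∈ ℝ with (a₁, a₂) ≠ (0, 0). For each integer n > 2 set r(n) = √(2γ/n), R(n) = (1/2) r(n) (a₁² + a₂² − r(n)² a₃²)^{1/2} (real for n large), α_n = cosh R(n) − i r(n)² a₃ · sinh R(n)/(2 R(n)), and β_n = r(n)(a₂ − i a₁) · sinh R(n)/(2 R(n)). Then for every z ∈ ℂ, lim_{n→∞} (α_n − conj(α_n)·|z|²/(2γn) − conj(β_n)·z/√(2γn) + β_n·conj(z)/√(2γn))^{−n} · (1 − |z|²/(2γn))^{n} = exp(−(γ/4)(a₁² + a₂²) + i γ a₃ + (1/2)(a₂ + i a₁) z − (1/2)(a₂ − i a₁) conj(z)). (This is the contraction of the Berezin symbols S_n(π_n(g_n))(z/√(2γn)) of the holomorphic discrete series of SU(1,1) to the symbol of the Heisenberg representation π_γ, where g_n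 = exp_{SU(1,1)}(C_{r(n)}(a₁v₁+a₂v₂+a₃v₃)) = g(α_n, β_n).) -/
/-!
Write the symbol as `A_n ^ (-n) * B_n ^ n` with `B_n = 1 - |z|²/(2γn)`. Since `(1 + w_n)^n → exp L`
whenever `n w_n → L`, it suffices that `n (B_n - A_n)` tends to the exponent `L`. Because
`n r(n)² = 2γ` and `√(2γn) = n r(n)`, `n (B_n - A_n)` is an explicit combination of
`n (1 - cosh R(n))`, `sinh R(n) / (2 R(n))` and `conj α_n - 1`. As `R(n) → 0` with
`n R(n)² → γ (a₁² + a₂²) / 2`, these tend to `-γ (a₁² + a₂²) / 4`, `1 / 2` and `0`.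
-/

open Filter Topology Complex ComplexConjugate

theorem Real.tendsto_sinh_div_self :
    Tendsto (fun x : ℝ => sinh x / x) (𝓝[≠] 0) (𝓝 1) := by
  simpa [cosh_zero, sinh_zero, div_eq_inv_mul] using (hasDerivAt_sinh 0).tendsto_slope_zero

theorem Real.tendsto_one_sub_cosh_div_sq :
    Tendsto (fun x : ℝ => (1 - cosh x) / x ^ 2) (𝓝[≠] 0) (𝓝 (-1 / 2)) := by
  have half : Tendsto (fun x : ℝ => x / 2) (𝓝[≠] 0) (𝓝[≠] 0) :=
    tendsto_nhdsWithin_of_tendsto_nhds_of_eventually_within _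
      ((continuous_id.div_const 2).tendsto' 0 0 (zero_div 2) |>.mono_left nhdsWithin_le_nhds)
      (eventually_nhdsWithin_of_forall fun x hx => div_ne_zero hx two_ne_zero)
  -- `(1 - cosh x) / x² = -(sinh (x/2) / (x/2))² / 2`, both sides being `0` at `x = 0`
  have h := ((tendsto_sinh_div_self.comp half).pow 2).const_mul (-1 / 2 : ℝ)
  rw [one_pow, mul_one] at h
  refine h.congr fun x => ?_
  simp only [Function.comp_apply]
  have hcosh : cosh x = 1 + 2 * sinh (x / 2) ^ 2 := by
    rw [← cosh_sq_sub_sinh_sq (x / 2), ← mul_div_cancel₀ x two_ne_zero, cosh_two_mul]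
    ring_nf
  rcases eq_or_ne x 0 with rfl | hx
  · simp
  · rw [hcosh]; field_simp; ring

theorem tendsto_zero_of_tendsto_natCast_mul {𝕜 : Type*} [RCLike 𝕜] {f : ℕ → 𝕜} {L : 𝕜}
    (h : Tendsto (fun n : ℕ => (n : 𝕜) * f n) atTop (𝓝 L)) :
    Tendsto f atTop (𝓝 0) := by
  have h' := h.mul (tendsto_inv_atTop_nhds_zero_nat (𝕜 := 𝕜))
  rw [mul_zero] at h'
  refine h'.congr' ((eventually_ne_atTop 0).mono fun n hn => ?_)
  field_simp

theorem Complex.tendsto_zpow_neg_mul_pow_of_tendsto_natCast_mul_sub {A B : ℕ → ℂ} {L : ℂ}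
    (hB : Tendsto B atTop (𝓝 1)) (h : Tendsto (fun n : ℕ => (n : ℂ) * (B n - A n)) atTop (𝓝 L)) :
    Tendsto (fun n : ℕ => A n ^ (-(n : ℤ)) * B n ^ n) atTop (𝓝 (exp L)) := by
  have hA : Tendsto A atTop (𝓝 1) := by
    simpa using hB.sub (tendsto_zero_of_tendsto_natCast_mul h)
  have hA0 : ∀ᶠ n in atTop, A n ≠ 0 := hA.eventually_ne one_ne_zero
  have hquot : Tendsto (fun n : ℕ => (n : ℂ) * (B n / A n - 1)) atTop (𝓝 L) := by
    have h' := h.div hA one_ne_zero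
    rw [div_one] at h'
    refine h'.congr' (hA0.mono fun n hn => ?_)
    simp only [Pi.div_apply]
    field_simp
  refine (tendsto_one_add_pow_exp_of_tendsto hquot).congr' (hA0.mono fun n hn => ?_)
  simp only [add_sub_cancel, zpow_neg, zpow_natCast, div_eq_inv_mul, mul_pow, inv_pow]

namespace Su11Contraction

variable {γ p a₃ : ℝ} {r R : ℕ → ℝ}

theorem sq_scale_eq (hγ : 0 ≤ γ) (hr : ∀ n : ℕ, r n = √(2 * γ / n)) (n : ℕ) :
    r n ^ 2 = 2 * γ / n := by
  rw [hr, Real.sq_sqrt (by positivity)]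

theorem sqrt_two_mul_natCast_eq (hγ : 0 ≤ γ) (hr : ∀ n : ℕ, r n = √(2 * γ / n)) (n : ℕ) :
    √(2 * γ * n) = r n * n := by
  have hr_nonneg : 0 ≤ r n := by rw [hr]; positivity
  rw [Real.sqrt_eq_iff_eq_sq (by positivity) (by positivity), mul_pow, sq_scale_eq hγ hr]
  rcases eq_or_ne (n : ℝ) 0 with hn | hn
  · simp [hn]
  · field_simp

theorem tendsto_scale_zero (hr : ∀ n : ℕ, r n = √(2 * γ / n)) : Tendsto r atTop (𝓝 0) := by
  have h := (Real.continuous_sqrt.tendsto 0).comp (tendsto_const_div_atTop_nhds_zero_nat (2 * γ))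
  rw [Real.sqrt_zero] at h
  exact h.congr fun n => (hr n).symm

theorem tendsto_radicand (hr : ∀ n : ℕ, r n = √(2 * γ / n)) :
    Tendsto (fun n => p - r n ^ 2 * a₃ ^ 2) atTop (𝓝 p) := by
  simpa using tendsto_const_nhds.sub (((tendsto_scale_zero hr).pow 2).mul_const (a₃ ^ 2))

theorem tendsto_angle_nhdsNE (hγ : 0 < γ) (hp : 0 < p) (hr : ∀ n : ℕ, r n = √(2 * γ / n))
    (hR : ∀ n : ℕ, R n = 1 / 2 * r n * √(p - r n ^ 2 * a₃ ^ 2)) :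
    Tendsto R atTop (𝓝[≠] 0) := by
  have hlim : Tendsto R atTop (𝓝 0) := by
    have h := ((tendsto_scale_zero hr).const_mul (1 / 2)).mul
      ((Real.continuous_sqrt.tendsto p).comp (tendsto_radicand (a₃ := a₃) hr))
    rw [mul_zero, zero_mul] at h
    exact h.congr fun n => (hR n).symm
  refine tendsto_nhdsWithin_iff.2 ⟨hlim, ?_⟩
  filter_upwards [eventually_ne_atTop 0, (tendsto_radicand hr).eventually (eventually_gt_nhds hp)]
    with n hn hrad
  have hr_pos : 0 < r n := by rw [hr]; positivity
  rw [Set.mem_compl_singleton_iff, hR]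
  positivity

theorem tendsto_natCast_mul_angle_sq (hγ : 0 ≤ γ) (hp : 0 < p)
    (hr : ∀ n : ℕ, r n = √(2 * γ / n))
    (hR : ∀ n : ℕ, R n = 1 / 2 * r n * √(p - r n ^ 2 * a₃ ^ 2)) :
    Tendsto (fun n : ℕ => n * R n ^ 2) atTop (𝓝 (γ / 2 * p)) := by
  have h := (tendsto_const_div_atTop_nhds_zero_nat (2 * γ)).mul_const (a₃ ^ 2)
  have h' := (tendsto_const_nhds (x := p)).sub h |>.const_mul (γ / 2)
  rw [zero_mul, sub_zero] at h'
  refine h'.congr' ?_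
  filter_upwards [eventually_ne_atTop 0, (tendsto_radicand hr).eventually (eventually_gt_nhds hp)]
    with n hn hrad
  rw [hR, mul_pow, mul_pow, Real.sq_sqrt hrad.le, sq_scale_eq hγ hr]
  field_simp

theorem tendsto_natCast_mul_one_sub_cosh (hγ : 0 < γ) (hp : 0 < p)
    (hr : ∀ n : ℕ, r n = √(2 * γ / n))
    (hR : ∀ n : ℕ, R n = 1 / 2 * r n * √(p - r n ^ 2 * a₃ ^ 2)) :
    Tendsto (fun n : ℕ => n * (1 - Real.cosh (R n))) atTop (𝓝 (-(γ / 4 * p))) := by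
  have hR₀ := tendsto_angle_nhdsNE hγ hp hr hR
  have h := (tendsto_natCast_mul_angle_sq hγ.le hp hr hR).mul
    (Real.tendsto_one_sub_cosh_div_sq.comp hR₀)
  rw [show γ / 2 * p * (-1 / 2) = -(γ / 4 * p) by ring] at h
  refine h.congr' ?_
  filter_upwards [hR₀.eventually self_mem_nhdsWithin] with n (hn : R n ≠ 0)
  simp only [Function.comp_apply]
  field_simp

theorem tendsto_sinh_div_two_mul (hγ : 0 < γ) (hp : 0 < p)
    (hr : ∀ n : ℕ, r n = √(2 * γ / n))
    (hR : ∀ n : ℕ, R n = 1 / 2 * r n * √(p - r n ^ 2 * a₃ ^ 2)) :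
    Tendsto (fun n => Real.sinh (R n) / (2 * R n)) atTop (𝓝 (1 / 2)) := by
  have h := (Real.tendsto_sinh_div_self.comp (tendsto_angle_nhdsNE hγ hp hr hR)).div_const 2
  refine h.congr fun n => ?_
  simp only [Function.comp_apply]
  ring

theorem natCast_mul_sub_eq {r c s a₁ a₂ : ℝ} {α β z : ℂ} {n : ℕ} (hn : n ≠ 0) (hr : r ≠ 0)
    (hγ : γ ≠ 0) (hrn : r ^ 2 = 2 * γ / n)
    (hα : α = c - I * (r : ℂ) ^ 2 * a₃ * s) (hβ : β = r * (a₂ - I * a₁) * s) :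
    (n : ℂ) * (((1 - ‖z‖ ^ 2 / (2 * γ * n) : ℝ) : ℂ)
      - (α - conj α * ((‖z‖ ^ 2 : ℝ) : ℂ) / (2 * γ * n)
        - conj β * z / ((r * n : ℝ) : ℂ) + β * conj z / ((r * n : ℝ) : ℂ)))
    = ((n * (1 - c) : ℝ) : ℂ) + (2 * s : ℝ) * (I * γ * a₃)
      + (conj α - 1) * (((‖z‖ ^ 2 : ℝ) : ℂ) / (2 * γ))
      + (2 * s : ℝ) * (1 / 2 * (a₂ + I * a₁) * z)
      - (2 * s : ℝ) * (1 / 2 * (a₂ - I * a₁) * conj z) := by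
  have hrn' : (r : ℂ) ^ 2 = 2 * γ / n := by exact_mod_cast hrn
  have hconjβ : conj β = r * (a₂ + I * a₁) * s := by
    simp only [hβ, map_mul, map_sub, conj_ofReal, conj_I]; ring
  have hrC : (r : ℂ) ≠ 0 := ofReal_ne_zero.2 hr
  have hγC : (γ : ℂ) ≠ 0 := ofReal_ne_zero.2 hγ
  have hnC : (n : ℂ) ≠ 0 := Nat.cast_ne_zero.2 hn
  rw [hconjβ, hβ]
  generalize conj α = α'
  rw [hα, hrn']
  push_cast
  field_simp
  ring

theorem tendsto_alpha_one {α : ℕ → ℂ} (hγ : 0 < γ) (hp : 0 < p)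
    (hr : ∀ n : ℕ, r n = √(2 * γ / n))
    (hR : ∀ n : ℕ, R n = 1 / 2 * r n * √(p - r n ^ 2 * a₃ ^ 2))
    (hα : ∀ n : ℕ, α n = (Real.cosh (R n) : ℂ) - I * (r n : ℂ) ^ 2 * a₃
      * ((Real.sinh (R n) / (2 * R n) : ℝ) : ℂ)) :
    Tendsto α atTop (𝓝 1) := by
  have hcosh : Tendsto (fun n => Real.cosh (R n)) atTop (𝓝 1) := by
    simpa [Function.comp_def] using (Real.continuous_cosh.tendsto 0).comp
      ((tendsto_angle_nhdsNE hγ hp hr hR).mono_right nhdsWithin_le_nhds)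
  have h := hcosh.ofReal.sub ((((tendsto_scale_zero hr).ofReal.pow 2).const_mul I).mul_const
    (a₃ : ℂ) |>.mul (tendsto_sinh_div_two_mul hγ hp hr hR).ofReal)
  rw [ofReal_one, ofReal_zero, zero_pow two_ne_zero, mul_zero, zero_mul, zero_mul, sub_zero] at h
  exact h.congr fun n => (hα n).symm

theorem tendsto_natCast_mul_sub {a₁ a₂ : ℝ} {α β : ℕ → ℂ} (hγ : 0 < γ)
    (hp : 0 < a₁ ^ 2 + a₂ ^ 2) (hr : ∀ n : ℕ, r n = √(2 * γ / n))
    (hR : ∀ n : ℕ, R n = 1 / 2 * r n * √(a₁ ^ 2 + a₂ ^ 2 - r n ^ 2 * a₃ ^ 2))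
    (hα : ∀ n : ℕ, α n = (Real.cosh (R n) : ℂ) - I * (r n : ℂ) ^ 2 * a₃
      * ((Real.sinh (R n) / (2 * R n) : ℝ) : ℂ))
    (hβ : ∀ n : ℕ, β n = (r n : ℂ) * (a₂ - I * a₁) * ((Real.sinh (R n) / (2 * R n) : ℝ) : ℂ))
    (z : ℂ) :
    Tendsto (fun n : ℕ => (n : ℂ) * (((1 - ‖z‖ ^ 2 / (2 * γ * n) : ℝ) : ℂ)
      - (α n - conj (α n) * ((‖z‖ ^ 2 : ℝ) : ℂ) / (2 * γ * n)
        - conj (β n) * z / ((√(2 * γ * n) : ℝ) : ℂ) + β n * conj z / ((√(2 * γ * n) : ℝ) : ℂ))))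
      atTop (𝓝 (-(γ / 4 : ℂ) * (a₁ ^ 2 + a₂ ^ 2) + I * γ * a₃
        + 1 / 2 * (a₂ + I * a₁) * z - 1 / 2 * (a₂ - I * a₁) * conj z)) := by
  have hs : Tendsto (fun n => ((2 * (Real.sinh (R n) / (2 * R n)) : ℝ) : ℂ)) atTop (𝓝 1) := by
    simpa using ((tendsto_sinh_div_two_mul hγ hp hr hR).const_mul 2).ofReal
  have hconj : Tendsto (fun n => conj (α n)) atTop (𝓝 1) := by
    simpa using (tendsto_alpha_one hγ hp hr hR hα).star
  have h := ((((tendsto_natCast_mul_one_sub_cosh hγ hp hr hR).ofReal.add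
    (hs.mul_const (I * γ * a₃))).add
    ((hconj.sub_const 1).mul_const (((‖z‖ ^ 2 : ℝ) : ℂ) / (2 * γ)))).add
    (hs.mul_const (1 / 2 * (a₂ + I * a₁) * z))).sub
    (hs.mul_const (1 / 2 * (a₂ - I * a₁) * conj z))
  rw [sub_self, zero_mul, add_zero, one_mul, one_mul, one_mul] at h
  convert h.congr' ?_ using 2
  · push_cast
    ring
  filter_upwards [eventually_ne_atTop 0] with n hn
  have hr_pos : 0 < r n := by rw [hr]; positivity
  rw [sqrt_two_mul_natCast_eq hγ.le hr, natCast_mul_sub_eq hn hr_pos.ne' hγ.ne'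
    (sq_scale_eq hγ.le hr n) (hα n) (hβ n)]

end Su11Contraction

/-- Contraction of the Berezin symbols of the holomorphic discrete series of `SU(1,1)`
to the symbol of the Heisenberg representation `π_γ`: with `r(n) = √(2γ/n)`,
`R(n) = (1/2) r(n) √(a₁² + a₂² − r(n)² a₃²)`,
`α_n = cosh R(n) − i r(n)² a₃ sinh R(n)/(2R(n))`,
`β_n = r(n)(a₂ − i a₁) sinh R(n)/(2R(n))`, one has
`lim_n S_n(π_n(g(α_n,β_n)))(z/√(2γn))
  = exp(−(γ/4)(a₁²+a₂²) + iγa₃ + (1/2)(a₂+ia₁)z − (1/2)(a₂−ia₁) conj z)`. -/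
theorem su11_contraction_of_berezin_symbols (γ a₁ a₂ a₃ : ℝ) (hγ : 0 < γ)
    (ha : (a₁, a₂) ≠ (0, 0))
    (r R : ℕ → ℝ) (α β : ℕ → ℂ)
    (hr : ∀ n : ℕ, r n = Real.sqrt (2 * γ / n))
    (hR : ∀ n : ℕ, R n = (1 / 2) * r n * Real.sqrt (a₁ ^ 2 + a₂ ^ 2 - (r n) ^ 2 * a₃ ^ 2))
    (hα : ∀ n : ℕ, α n = ((Real.cosh (R n) : ℝ) : ℂ)
      - Complex.I * ((r n : ℝ) : ℂ) ^ 2 * (a₃ : ℂ)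
        * ((Real.sinh (R n) / (2 * R n) : ℝ) : ℂ))
    (hβ : ∀ n : ℕ, β n = ((r n : ℝ) : ℂ) * ((a₂ : ℂ) - Complex.I * (a₁ : ℂ))
        * ((Real.sinh (R n) / (2 * R n) : ℝ) : ℂ))
    (z : ℂ) :
    Tendsto (fun n : ℕ =>
        (α n - (starRingEnd ℂ) (α n) * ((‖z‖ ^ 2 : ℝ) : ℂ)
              / (2 * (γ : ℂ) * (n : ℂ))
            - (starRingEnd ℂ) (β n) * z / ((Real.sqrt (2 * γ * n) : ℝ) : ℂ)
            + β n * (starRingEnd ℂ) z / ((Real.sqrt (2 * γ * n) : ℝ) : ℂ)) ^ (-(n : ℤ))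
          * (((1 - ‖z‖ ^ 2 / (2 * γ * n) : ℝ) : ℂ)) ^ (n : ℕ))
      atTop
      (nhds (Complex.exp (-(((γ : ℂ)) / 4) * ((a₁ : ℂ) ^ 2 + (a₂ : ℂ) ^ 2)
        + Complex.I * (γ : ℂ) * (a₃ : ℂ)
        + (1 / 2) * ((a₂ : ℂ) + Complex.I * (a₁ : ℂ)) * z
        - (1 / 2) * ((a₂ : ℂ) - Complex.I * (a₁ : ℂ)) * (starRingEnd ℂ) z))) := by
  have hp : 0 < a₁ ^ 2 + a₂ ^ 2 := by
    have h : a₁ ≠ 0 ∨ a₂ ≠ 0 := by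
      contrapose! ha
      rw [ha.1, ha.2]
    rcases h with h | h <;> positivity
  have hB : Tendsto (fun n : ℕ => ((1 - ‖z‖ ^ 2 / (2 * γ * n) : ℝ) : ℂ)) atTop (𝓝 1) := by
    have h := ((tendsto_const_div_atTop_nhds_zero_nat (‖z‖ ^ 2 / (2 * γ))).const_sub 1).ofReal
    rw [sub_zero, ofReal_one] at h
    exact h.congr fun n => by rw [div_div]
  exact Complex.tendsto_zpow_neg_mul_pow_of_tendsto_natCast_mul_sub hB
    (Su11Contraction.tendsto_natCast_mul_sub hγ hp hr hR hα hβ z)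
end

section
/- Let γ > 0. Then for every λ ∈ ℝ, lim_{n→∞} (1/(2π)) ∫_ℝ e^{−itλ} (cosh(t √(γ/(2n))))^{−n} dt = (πγ)^{−1/2} e^{−λ²/γ}. That is, the spectral densities of the operators −i dπ_n(C_{r(n)}(v₁)) in the state 1 ∈ H_n converge pointwise to the Gaussian spectral density of −i dπ_γ(v₁) in the state 1 ∈ H_γ. -/
open Filter MeasureTheory Topology

/-!
Since `n · (t √(γ/(2n)))² = γt²/2`, squeezing `cosh x` between `1 + x²/2` and `exp (x²/2)` shows
that `cosh (t √(γ/(2n))) ^ (-n) → exp (-γt²/4)`. Bernoulli's inequality bounds the same functions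
by `(1 + γt²/4)⁻¹` uniformly in `n`, so by dominated convergence the integrals converge to the
Fourier transform of the Gaussian `exp (-γt²/4)` at `λ`, which is `√(4π/γ) exp (-λ²/γ)`.
-/

namespace Real

theorem one_add_sq_div_two_le_cosh (x : ℝ) : 1 + x ^ 2 / 2 ≤ cosh x := by
  have h := sum_le_hasSum (Finset.range 2) (fun i _ => by rw [pow_mul]; positivity)
    (hasSum_cosh x)
  simpa [Finset.sum_range_succ] using h

theorem one_add_nat_mul_sq_div_two_le_cosh_pow (n : ℕ) (x : ℝ) :
    1 + n * (x ^ 2 / 2) ≤ cosh x ^ n :=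
  calc 1 + n * (x ^ 2 / 2) ≤ (1 + x ^ 2 / 2) ^ n :=
        one_add_mul_le_pow (by linarith [sq_nonneg x]) n
    _ ≤ cosh x ^ n := pow_le_pow_left₀ (by positivity) (one_add_sq_div_two_le_cosh x) n

theorem tendsto_cosh_pow_of_tendsto_nat_mul_sq {x : ℕ → ℝ} {c : ℝ}
    (hx : Tendsto (fun n : ℕ => n * x n ^ 2) atTop (𝓝 c)) :
    Tendsto (fun n : ℕ => cosh (x n) ^ n) atTop (𝓝 (exp (c / 2))) := by
  have hx' : Tendsto (fun n : ℕ => n * (x n ^ 2 / 2)) atTop (𝓝 (c / 2)) := by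
    simpa only [mul_div_assoc] using hx.div_const 2
  refine tendsto_of_tendsto_of_tendsto_of_le_of_le
    (tendsto_one_add_pow_exp_of_tendsto hx') ((continuous_exp.tendsto _).comp hx')
    (fun n => pow_le_pow_left₀ (by positivity) (one_add_sq_div_two_le_cosh _) n) (fun n => ?_)
  calc cosh (x n) ^ n ≤ exp (x n ^ 2 / 2) ^ n :=
        pow_le_pow_left₀ (cosh_pos _).le (cosh_le_exp_half_sq _) n
    _ = exp (n * (x n ^ 2 / 2)) := (exp_nat_mul _ n).symm

end Real

theorem nat_mul_sq_mul_sqrt_div {γ : ℝ} (hγ : 0 ≤ γ) {n : ℕ} (hn : n ≠ 0) (t : ℝ) :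
    n * (t * √(γ / (2 * n))) ^ 2 = γ / 2 * t ^ 2 := by
  have hn' : (n : ℝ) ≠ 0 := Nat.cast_ne_zero.2 hn
  rw [mul_pow, Real.sq_sqrt (by positivity)]
  field_simp

theorem tendsto_cosh_mul_sqrt_zpow {γ : ℝ} (hγ : 0 ≤ γ) (t : ℝ) :
    Tendsto (fun n : ℕ => Real.cosh (t * √(γ / (2 * n))) ^ (-(n : ℤ))) atTop
      (𝓝 (Real.exp (-(γ / 4 * t ^ 2)))) := by
  have hlim : Tendsto (fun n : ℕ => n * (t * √(γ / (2 * n))) ^ 2) atTop (𝓝 (γ / 2 * t ^ 2)) :=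
    tendsto_const_nhds.congr' <| (eventually_ne_atTop 0).mono
      fun n hn => (nat_mul_sq_mul_sqrt_div hγ hn t).symm
  have hpow := (Real.tendsto_cosh_pow_of_tendsto_nat_mul_sq hlim).inv₀ (Real.exp_pos _).ne'
  simp only [zpow_neg, zpow_natCast]
  rwa [← Real.exp_neg, show γ / 2 * t ^ 2 / 2 = γ / 4 * t ^ 2 by ring] at hpow

theorem cosh_mul_sqrt_zpow_le {γ : ℝ} (hγ : 0 ≤ γ) {n : ℕ} (hn : n ≠ 0) (t : ℝ) :
    Real.cosh (t * √(γ / (2 * n))) ^ (-(n : ℤ)) ≤ (1 + (t * (√γ / 2)) ^ 2)⁻¹ := by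
  have hsq : (t * (√γ / 2)) ^ 2 = n * ((t * √(γ / (2 * n))) ^ 2 / 2) := by
    rw [← mul_div_assoc (n : ℝ), nat_mul_sq_mul_sqrt_div hγ hn, mul_pow, div_pow, Real.sq_sqrt hγ]
    ring
  rw [zpow_neg, zpow_natCast, hsq]
  exact inv_anti₀ (by positivity) (Real.one_add_nat_mul_sq_div_two_le_cosh_pow n _)

theorem integral_cexp_neg_I_mul_mul_gaussian {b : ℝ} (hb : 0 < b) (l : ℝ) :
    ∫ t : ℝ, Complex.exp (-(Complex.I * t * l)) * ((Real.exp (-(b * t ^ 2)) : ℝ) : ℂ)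
      = ((√(Real.pi / b) * Real.exp (-l ^ 2 / (4 * b)) : ℝ) : ℂ) := by
  have h := fourierIntegral_gaussian (b := b) (by simpa using hb) (-l : ℂ)
  have hsqrt : ((Real.pi : ℂ) / b) ^ (1 / 2 : ℂ) = ((√(Real.pi / b) : ℝ) : ℂ) := by
    rw [Real.sqrt_eq_rpow, Complex.ofReal_cpow (by positivity)]
    push_cast
    ring_nf
  simp only [hsqrt, neg_mul] at h ⊢
  convert h using 3 with t
  · push_cast
    ring_nf
  · push_cast
    field_simp

theorem tendsto_integral_cexp_mul_cosh_mul_sqrt_zpow {γ : ℝ} (hγ : 0 < γ) (l : ℝ) :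
    Tendsto (fun n : ℕ => ∫ t : ℝ, Complex.exp (-(Complex.I * t * l))
        * (((Real.cosh (t * √(γ / (2 * n)))) ^ (-(n : ℤ)) : ℝ) : ℂ))
      atTop (𝓝 (∫ t : ℝ, Complex.exp (-(Complex.I * t * l))
        * ((Real.exp (-(γ / 4 * t ^ 2)) : ℝ) : ℂ))) := by
  refine tendsto_integral_filter_of_dominated_convergence
    (fun t : ℝ => (1 + (t * (√γ / 2)) ^ 2)⁻¹) (Eventually.of_forall fun n => ?_) ?_
    (integrable_inv_one_add_sq.comp_mul_right' (by positivity)) (ae_of_all _ fun t => ?_)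
  · have hcont : Continuous fun t : ℝ => Real.cosh (t * √(γ / (2 * n))) ^ (-(n : ℤ)) :=
      (by fun_prop : Continuous fun t : ℝ => Real.cosh (t * √(γ / (2 * n)))).zpow₀ _
        fun _ => Or.inl (Real.cosh_pos _).ne'
    exact (by fun_prop : Continuous fun t : ℝ => Complex.exp (-(Complex.I * t * l))).mul
      (Complex.continuous_ofReal.comp hcont) |>.aestronglyMeasurable
  · filter_upwards [eventually_ne_atTop 0] with n hn
    refine ae_of_all _ fun t => ?_
    rw [norm_mul, Complex.norm_exp, Complex.norm_real, Real.norm_eq_abs,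
      abs_of_pos (zpow_pos (Real.cosh_pos _) _)]
    simpa using cosh_mul_sqrt_zpow_le hγ.le hn t
  · exact tendsto_const_nhds.mul
      ((Complex.continuous_ofReal.tendsto _).comp (tendsto_cosh_mul_sqrt_zpow hγ.le t))

/-- Convergence of the spectral densities in the contraction of the holomorphic
discrete series of `SU(1,1)` to the Heisenberg representation: for `γ > 0` and every
`λ ∈ ℝ`,
`lim_{n→∞} (1/(2π)) ∫ e^{−itλ} (cosh (t√(γ/(2n))))^{−n} dt = (πγ)^{−1/2} e^{−λ²/γ}`. -/
theorem spectral_density_contraction_su11 (γ : ℝ) (hγ : 0 < γ) (l : ℝ) :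
    Tendsto (fun n : ℕ =>
        (((2 * Real.pi)⁻¹ : ℝ) : ℂ)
          * ∫ t : ℝ, Complex.exp (-(Complex.I * t * l))
              * (((Real.cosh (t * Real.sqrt (γ / (2 * n)))) ^ (-(n : ℤ)) : ℝ) : ℂ))
      atTop
      (nhds ((((Real.sqrt (Real.pi * γ))⁻¹ * Real.exp (-l ^ 2 / γ) : ℝ) : ℂ))) := by
  have hlim := (tendsto_integral_cexp_mul_cosh_mul_sqrt_zpow hγ l).const_mul
    ((((2 * Real.pi)⁻¹ : ℝ) : ℂ))
  have hγ4 : 0 < γ / 4 := by positivity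
  have hconst : (2 * Real.pi)⁻¹ * √(Real.pi / (γ / 4)) = (√(Real.pi * γ))⁻¹ := by
    rw [show Real.pi / (γ / 4) = (2 * Real.pi) ^ 2 / (Real.pi * γ) by field_simp; ring,
      Real.sqrt_div' _ (by positivity), Real.sqrt_sq (by positivity)]
    field_simp
  rwa [integral_cexp_neg_I_mul_mul_gaussian hγ4, ← Complex.ofReal_mul, ← mul_assoc, hconst,
    show 4 * (γ / 4) = γ by ring] at hlim
end

section
/- Let m be a positive integer and let k be an integer with 0 ≤ k ≤ m. Then ∫_ℂ |z − 1|^{2k} |z + 1|^{2(m−k)} · ((m+1)/π) (1 + |z|²)^{−m−2} dA(z) = 2^m · (binomial(m,k))⁻¹, where dA is Lebesgue measure on ℂ. That is, the eigenvector F_k^m(z) = (z−1)^k (z+1)^{m−k} has squared norm 2^m / binomial(m,k) in the space F_m. -/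
/-!
The Möbius map `w = (z - 1) / (z + 1)` has real Jacobian `4 / |z + 1|⁴`, and by the parallelogram
law `|z - 1|² + |z + 1|² = 2 (1 + |z|²)` it pulls `|w|^{2k} (1 + |w|²)^{-m-2}` back to
`2^{-m} |z - 1|^{2k} |z + 1|^{2(m-k)} (1 + |z|²)^{-m-2}`. Polar coordinates with `t = |w|²` then
reduce the integral to `π` times the beta integral
`∫₀^∞ t^k (1 + t)^{-m-2} dt = k! (m-k)! / (m+1)!`, which integration by parts computes by
induction on `k`.
-/

open MeasureTheory Set Filter
open scoped Nat Real Topology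

lemma pow_mul_inv_one_add_pow_le {j d n : ℕ} (h : j + d ≤ n) {x : ℝ} (hx : 0 ≤ x) :
    x ^ j * ((1 + x) ^ n)⁻¹ ≤ ((1 + x) ^ d)⁻¹ :=
  calc x ^ j * ((1 + x) ^ n)⁻¹ ≤ (1 + x) ^ j * ((1 + x) ^ (j + d))⁻¹ := by
        gcongr <;> linarith
    _ = ((1 + x) ^ d)⁻¹ := by
        rw [pow_add]
        field_simp

lemma tendsto_pow_mul_inv_one_add_pow_atTop {j n : ℕ} (h : j < n) :
    Tendsto (fun x : ℝ ↦ x ^ j * ((1 + x) ^ n)⁻¹) atTop (𝓝 0) := by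
  have hlim : Tendsto (fun x : ℝ ↦ ((1 + x) ^ 1)⁻¹) atTop (𝓝 0) := by
    simpa [Function.comp_def] using
      tendsto_inv_atTop_zero.comp (tendsto_atTop_add_const_left _ 1 tendsto_id)
  refine squeeze_zero' ?_ ?_ hlim <;> filter_upwards [eventually_ge_atTop 0] with x hx
  · positivity
  · exact pow_mul_inv_one_add_pow_le h hx

lemma integrableOn_Ioi_pow_mul_inv_one_add_pow {j n : ℕ} (h : j + 2 ≤ n) :
    IntegrableOn (fun x : ℝ ↦ x ^ j * ((1 + x) ^ n)⁻¹) (Ioi 0) := by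
  have hdom : IntegrableOn (fun x : ℝ ↦ (1 + ‖x‖) ^ (-2 : ℝ)) (Ioi 0) :=
    (integrable_one_add_norm (by norm_num)).integrableOn
  refine hdom.mono' (by fun_prop) ?_
  filter_upwards [ae_restrict_mem measurableSet_Ioi] with x (hx : 0 < x)
  rw [Real.norm_of_nonneg hx.le, Real.norm_of_nonneg (by positivity),
    Real.rpow_neg (by positivity)]
  norm_cast
  exact pow_mul_inv_one_add_pow_le h hx.le

lemma hasDerivAt_inv_one_add_pow_succ (n : ℕ) {x : ℝ} (hx : 1 + x ≠ 0) :
    HasDerivAt (fun x : ℝ ↦ ((1 + x) ^ (n + 1))⁻¹) (-(n + 1) * ((1 + x) ^ (n + 2))⁻¹) x := by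
  refine ((((hasDerivAt_id x).const_add 1).fun_pow (n + 1)).inv
    (pow_ne_zero _ hx)).congr_deriv ?_
  simp only [id, add_tsub_cancel_right]
  field_simp
  push_cast
  ring

lemma integral_Ioi_inv_one_add_pow (b : ℕ) :
    ∫ x in Ioi (0 : ℝ), ((1 + x) ^ (b + 2))⁻¹ = ((b : ℝ) + 1)⁻¹ := by
  have hint : IntegrableOn (fun x : ℝ ↦ ((1 + x) ^ (b + 2))⁻¹) (Ioi 0) := by
    simpa using integrableOn_Ioi_pow_mul_inv_one_add_pow (j := 0) (n := b + 2) (by omega)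
  have hftc := integral_Ioi_of_hasDerivAt_of_tendsto
    (ContinuousAt.continuousWithinAt (by fun_prop (disch := norm_num)))
    (fun x (hx : 0 < x) ↦ hasDerivAt_inv_one_add_pow_succ b (by positivity))
    (hint.const_mul _)
    (by simpa using tendsto_pow_mul_inv_one_add_pow_atTop (j := 0) (n := b + 1) (by omega))
  rw [integral_const_mul] at hftc
  norm_num at hftc
  rw [← one_div, eq_div_iff (by positivity)]
  linarith

lemma integral_Ioi_pow_succ_mul_inv_one_add_pow (a b : ℕ) :
    ∫ x in Ioi (0 : ℝ), x ^ (a + 1) * ((1 + x) ^ (a + b + 3))⁻¹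
      = (a + 1) / (a + b + 2) * ∫ x in Ioi (0 : ℝ), x ^ a * ((1 + x) ^ (a + b + 2))⁻¹ := by
  have hint₁ := integrableOn_Ioi_pow_mul_inv_one_add_pow (j := a) (n := a + b + 2) (by omega)
  have hint₂ := integrableOn_Ioi_pow_mul_inv_one_add_pow (j := a + 1) (n := a + b + 3) (by omega)
  have hderiv (x : ℝ) (hx : 0 < x) :
      HasDerivAt (fun x ↦ x ^ (a + 1) * ((1 + x) ^ (a + b + 2))⁻¹)
        ((a + 1) * (x ^ a * ((1 + x) ^ (a + b + 2))⁻¹)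
          - (a + b + 2) * (x ^ (a + 1) * ((1 + x) ^ (a + b + 3))⁻¹)) x := by
    refine ((hasDerivAt_pow (a + 1) x).mul
      (hasDerivAt_inv_one_add_pow_succ (a + b + 1) (by positivity))).congr_deriv ?_
    push_cast
    ring
  -- The antiderivative `x ^ (a + 1) (1 + x) ^ -(a + b + 2)` vanishes at both ends of `(0, ∞)`.
  have hftc := integral_Ioi_of_hasDerivAt_of_tendsto
    (ContinuousAt.continuousWithinAt (by fun_prop (disch := norm_num))) hderiv
    ((hint₁.const_mul _).sub (hint₂.const_mul _))
    (tendsto_pow_mul_inv_one_add_pow_atTop (by omega))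
  rw [integral_sub (hint₁.const_mul _) (hint₂.const_mul _), integral_const_mul,
    integral_const_mul] at hftc
  norm_num at hftc
  rw [div_mul_eq_mul_div, eq_div_iff (by positivity)]
  linarith

theorem integral_Ioi_pow_mul_inv_one_add_pow (a b : ℕ) :
    ∫ x in Ioi (0 : ℝ), x ^ a * ((1 + x) ^ (a + b + 2))⁻¹ = a ! * b ! / (a + b + 1)! := by
  induction a with
  | zero =>
    simp only [pow_zero, one_mul, zero_add, integral_Ioi_inv_one_add_pow, Nat.factorial_zero,
      Nat.factorial_succ b]
    push_cast
    field_simp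
  | succ a ih =>
    rw [show a + 1 + b + 2 = a + b + 3 by omega, integral_Ioi_pow_succ_mul_inv_one_add_pow, ih,
      show a + 1 + b + 1 = a + b + 1 + 1 by omega, Nat.factorial_succ (a + b + 1),
      Nat.factorial_succ a]
    push_cast
    field_simp
    ring

theorem Complex.integral_comp_sq_norm {E : Type*} [NormedAddCommGroup E] [NormedSpace ℝ E]
    (g : ℝ → E) : ∫ z : ℂ, g (‖z‖ ^ 2) = π • ∫ t in Ioi (0 : ℝ), g t := by
  rw [integral_fun_norm_addHaar volume (fun r ↦ g (r ^ 2)), Complex.finrank_real_complex,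
    ← integral_comp_rpow_Ioi_of_pos (g := g) two_pos, measureReal_def, Complex.volume_ball]
  norm_num [Real.rpow_two, smul_smul, ← integral_smul, ← Nat.cast_smul_eq_nsmul ℝ]
  ring_nf

theorem integral_norm_pow_mul_inv_one_add_sq_norm_pow (k j : ℕ) :
    ∫ w : ℂ, ‖w‖ ^ (2 * k) * ((1 + ‖w‖ ^ 2) ^ (k + j + 2))⁻¹
      = π * k ! * j ! / (k + j + 1)! := by
  simp only [pow_mul]
  rw [Complex.integral_comp_sq_norm (fun t ↦ t ^ k * ((1 + t) ^ (k + j + 2))⁻¹),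
    integral_Ioi_pow_mul_inv_one_add_pow, smul_eq_mul]
  ring

theorem Complex.integral_image_eq_integral_sq_norm_deriv_smul {E : Type*} [NormedAddCommGroup E]
    [NormedSpace ℝ E] {s : Set ℂ} {f f' : ℂ → ℂ} (hs : MeasurableSet s)
    (hf' : ∀ x ∈ s, HasDerivAt f (f' x) x) (hf : InjOn f s) (g : ℂ → E) :
    ∫ x in f '' s, g x = ∫ x in s, ‖f' x‖ ^ 2 • g (f x) := by
  rw [integral_image_eq_integral_abs_det_fderiv_smul volume hs
    (fun x hx ↦ ((hf' x hx).hasFDerivAt.restrictScalars ℝ).hasFDerivWithinAt) hf]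
  congr! with x
  simp [ContinuousLinearMap.det, LinearMap.det_restrictScalars, Algebra.norm_complex_eq,
    Complex.normSq_eq_norm_sq]

lemma bijOn_sub_one_div_add_one :
    BijOn (fun z : ℂ ↦ (z - 1) / (z + 1)) {-1}ᶜ {1}ᶜ := by
  have hne {z : ℂ} (hz : z ≠ -1) : z + 1 ≠ 0 := fun h ↦ hz (eq_neg_of_add_eq_zero_left h)
  have hne' {w : ℂ} (hw : w ≠ 1) : 1 - w ≠ 0 := fun h ↦ hw (sub_eq_zero.mp h).symm
  refine InvOn.bijOn (f' := fun w ↦ (1 + w) / (1 - w)) ⟨fun z hz ↦ ?_, fun w hw ↦ ?_⟩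
    (fun z hz ↦ ?_) (fun w hw ↦ ?_)
  · field_simp [hne hz]
    ring
  · field_simp [hne' hw]
    ring
  · rw [mem_compl_singleton_iff, Ne, div_eq_one_iff_eq (hne hz)]
    intro h
    have : (2 : ℂ) = 0 := by linear_combination -h
    norm_num at this
  · rw [mem_compl_singleton_iff, Ne, div_eq_iff (hne' hw)]
    intro h
    have : (2 : ℂ) = 0 := by linear_combination h
    norm_num at this

theorem Complex.integral_eq_integral_comp_sub_one_div_add_one {E : Type*} [NormedAddCommGroup E]
    [NormedSpace ℝ E] (F : ℂ → E) :
    ∫ w, F w = ∫ z, (4 / ‖z + 1‖ ^ 4) • F ((z - 1) / (z + 1)) := by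
  have hderiv (z : ℂ) (hz : z ∈ ({-1}ᶜ : Set ℂ)) :
      HasDerivAt (fun z ↦ (z - 1) / (z + 1)) (2 / (z + 1) ^ 2) z := by
    have hz : z + 1 ≠ 0 := fun h ↦ hz (eq_neg_of_add_eq_zero_left h)
    refine (((hasDerivAt_id z).sub_const 1).div ((hasDerivAt_id z).add_const 1) hz).congr_deriv
      ?_
    simp only [id]
    field_simp
    ring
  calc ∫ w, F w = ∫ w in {1}ᶜ, F w := by rw [restrict_compl_singleton]
    _ = ∫ z in {-1}ᶜ, ‖2 / (z + 1) ^ 2‖ ^ 2 • F ((z - 1) / (z + 1)) := by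
      rw [← bijOn_sub_one_div_add_one.image_eq,
        Complex.integral_image_eq_integral_sq_norm_deriv_smul (measurableSet_singleton _).compl
          hderiv bijOn_sub_one_div_add_one.injOn]
    _ = _ := by
      rw [restrict_compl_singleton]
      norm_num [norm_div, ← pow_mul, div_pow]

lemma one_add_sq_norm_sub_one_div_add_one {z : ℂ} (hz : z + 1 ≠ 0) :
    1 + ‖(z - 1) / (z + 1)‖ ^ 2 = 2 * (1 + ‖z‖ ^ 2) / ‖z + 1‖ ^ 2 := by
  have hpar := parallelogram_law_with_norm ℝ z 1
  rw [norm_one] at hpar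
  rw [norm_div, div_pow, eq_div_iff (by positivity)]
  field_simp
  linear_combination hpar

theorem integral_norm_sub_one_pow_mul_norm_add_one_pow (k j : ℕ) :
    ∫ z : ℂ, ‖z - 1‖ ^ (2 * k) * ‖z + 1‖ ^ (2 * j) * ((1 + ‖z‖ ^ 2) ^ (k + j + 2))⁻¹
      = 2 ^ (k + j) * ∫ w : ℂ, ‖w‖ ^ (2 * k) * ((1 + ‖w‖ ^ 2) ^ (k + j + 2))⁻¹ := by
  rw [Complex.integral_eq_integral_comp_sub_one_div_add_one
    (fun w ↦ ‖w‖ ^ (2 * k) * ((1 + ‖w‖ ^ 2) ^ (k + j + 2))⁻¹), ← integral_const_mul]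
  refine integral_congr_ae ((Measure.ae_ne volume (-1)).mono fun z hz ↦ ?_)
  have hz : z + 1 ≠ 0 := fun h ↦ hz (eq_neg_of_add_eq_zero_left h)
  have hz' : 0 < ‖z + 1‖ := norm_pos_iff.mpr hz
  simp only [smul_eq_mul]
  rw [one_add_sq_norm_sub_one_div_add_one hz, norm_div]
  generalize 1 + ‖z‖ ^ 2 = q
  simp only [div_pow, mul_pow, ← pow_mul, pow_add]
  field_simp
  ring

theorem su2_eigenvector_norm_general (m : ℕ) (k : ℕ) (hk : k ≤ m) :
    ∫ z : ℂ, (‖z - 1‖) ^ (2 * k) * (‖z + 1‖) ^ (2 * (m - k))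
        * (((m : ℝ) + 1) / Real.pi) * ((1 + (‖z‖) ^ 2) ^ (m + 2))⁻¹
      = 2 ^ m * ((Nat.choose m k : ℝ))⁻¹ := by
  obtain ⟨j, rfl⟩ := Nat.exists_eq_add_of_le hk
  rw [Nat.add_sub_cancel_left]
  calc _ = ((k + j : ℕ) + 1) / π * ∫ z : ℂ, ‖z - 1‖ ^ (2 * k) * ‖z + 1‖ ^ (2 * j)
        * ((1 + ‖z‖ ^ 2) ^ (k + j + 2))⁻¹ := by
        rw [← integral_const_mul]
        congr 1 with z
        ring
    _ = ((k + j : ℕ) + 1) / π * (2 ^ (k + j) * (π * k ! * j ! / (k + j + 1)!)) := by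
        rw [integral_norm_sub_one_pow_mul_norm_add_one_pow,
          integral_norm_pow_mul_inv_one_add_sq_norm_pow]
    _ = _ := by
        rw [Nat.cast_choose ℝ hk, Nat.add_sub_cancel_left, Nat.factorial_succ]
        push_cast
        field_simp

/-- Squared norm of the eigenvector `F_k^m(z) = (z−1)^k (z+1)^{m−k}` in the carrying
space `F_m` of the spin-`m/2` representation of `SU(2)`:
`∫_ℂ |z−1|^{2k} |z+1|^{2(m−k)} ((m+1)/π)(1+|z|²)^{−m−2} dA(z) = 2^m / C(m,k)`. -/
theorem su2_eigenvector_norm (m : ℕ) (hm : 0 < m) (k : ℕ) (hk : k ≤ m) :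
    ∫ z : ℂ, (‖z - 1‖) ^ (2 * k) * (‖z + 1‖) ^ (2 * (m - k))
        * (((m : ℝ) + 1) / Real.pi) * ((1 + (‖z‖) ^ 2) ^ (m + 2))⁻¹
      = 2 ^ m * ((Nat.choose m k : ℝ))⁻¹ :=
  su2_eigenvector_norm_general m k hk
end
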